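/- For every finite set S of n points in the plane and every natural number F with F < ⌈n/2⌉, there exists a point K such that: for every subset N ⊆ S with |S \ N| ≤ F, every point c and real ρ with dist(p, c) ≤ ρ for all p ∈ N, and every p ∈ N, one has dist(p, K) ≤ 2·√2·ρ. (Hence sending all robots straight to K gathers every possible reliable subset N within at most 2√2 times its optimal gathering time, i.e., the move-to-intersection algorithm has competitive ratio at most 2√2 when fewer than ⌈n/2⌉ robots are byzantine.) -/

import Mathlib

/-!
Let `K` have as coordinates medians of the coordinates of `S`. Each closed half-plane
`xᵢ ≤ Kᵢ`, `xᵢ ≥ Kᵢ` contains at least `⌈n/2⌉ > F` points of `S`, hence a point of `N`.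
Both lie in the ball around `c`, so `|Kᵢ - cᵢ| ≤ ρ` for `i = 1, 2`, giving `dist c K ≤ √2 ρ`
and `dist p K ≤ (1 + √2) ρ ≤ 2√2 ρ`.
-/

open Finset

theorem Finset.exists_two_mul_card_filter_le_and_lt {α β : Type*} [LinearOrder β]
    (S : Finset α) (hS : S.Nonempty) (f : α → β) :
    ∃ t, #S ≤ 2 * #{p ∈ S | f p ≤ t} ∧ 2 * #{p ∈ S | f p < t} ≤ #S := by
  set T := {p ∈ S | #S ≤ 2 * #{q ∈ S | f q ≤ f p}}
  obtain ⟨pmax, hpmax, hmax⟩ := S.exists_max_image f hS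
  have hT : T.Nonempty := ⟨pmax, mem_filter.mpr ⟨hpmax, by
    rw [filter_true_of_mem fun q hq => hmax q hq]; omega⟩⟩
  obtain ⟨p₀, hp₀, hmin⟩ := T.exists_min_image f hT
  refine ⟨f p₀, (mem_filter.mp hp₀).2, ?_⟩
  rcases {q ∈ S | f q < f p₀}.eq_empty_or_nonempty with hempty | hne
  · simp [hempty]
  obtain ⟨q, hq, hqmax⟩ := exists_max_image _ f hne
  rw [mem_filter] at hq
  have hsub : {p ∈ S | f p < f p₀} ⊆ {p ∈ S | f p ≤ f q} :=
    fun p hp => mem_filter.mpr ⟨(mem_filter.mp hp).1, hqmax p hp⟩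
  have hqT : 2 * #{p ∈ S | f p ≤ f q} < #S := by
    by_contra! h
    exact (hmin q (mem_filter.mpr ⟨hq.1, h⟩)).not_gt hq.2
  have := card_le_card hsub
  omega

theorem Finset.exists_median {α β : Type*} [LinearOrder β]
    (S : Finset α) (hS : S.Nonempty) (f : α → β) :
    ∃ t, #S ≤ 2 * #{p ∈ S | f p ≤ t} ∧ #S ≤ 2 * #{p ∈ S | t ≤ f p} := by
  obtain ⟨t, hle, hlt⟩ := S.exists_two_mul_card_filter_le_and_lt hS f
  refine ⟨t, hle, ?_⟩
  have := S.card_filter_add_card_filter_not (fun p => t ≤ f p)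
  simp only [not_le] at this
  omega

theorem Nat.ceil_half_le_iff {K : Type*} [Field K] [LinearOrder K] [IsStrictOrderedRing K]
    [FloorSemiring K] {n k : ℕ} : ⌈(n : K) / 2⌉₊ ≤ k ↔ n ≤ 2 * k := by
  rw [Nat.ceil_le, div_le_iff₀ two_pos, mul_comm]
  exact_mod_cast Iff.rfl

theorem Finset.exists_mem_of_card_sdiff_lt {α : Type*} [DecidableEq α] {A S N : Finset α}
    (hA : A ⊆ S) (h : #(S \ N) < #A) : ∃ q ∈ A, q ∈ N := by
  obtain ⟨q, hqA, hq⟩ := exists_mem_notMem_of_card_lt_card h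
  exact ⟨q, hqA, by simpa [hA hqA] using hq⟩

theorem Real.dist_le_of_mem_Icc_of_dist_le {q q' t c ρ : ℝ} (hq : dist q c ≤ ρ)
    (hq' : dist q' c ≤ ρ) (ht : t ∈ Set.Icc q q') : dist t c ≤ ρ := by
  rw [Real.dist_eq, abs_le] at *
  constructor <;> linarith [ht.1, ht.2]

theorem EuclideanSpace.dist_le_sqrt_card_mul {ι : Type*} [Fintype ι]
    {x y : EuclideanSpace ℝ ι} {r : ℝ} (hr : 0 ≤ r) (h : ∀ i, dist (x i) (y i) ≤ r) :
    dist x y ≤ √(Fintype.card ι) * r := by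
  rw [EuclideanSpace.dist_eq]
  calc √(∑ i, dist (x i) (y i) ^ 2) ≤ √(∑ _i : ι, r ^ 2) :=
        Real.sqrt_le_sqrt (sum_le_sum fun i _ => pow_le_pow_left₀ dist_nonneg (h i) 2)
    _ = √(Fintype.card ι) * r := by
        rw [sum_const, card_univ, nsmul_eq_mul, Real.sqrt_mul (Nat.cast_nonneg _),
          Real.sqrt_sq hr]

theorem move_to_intersection_competitive
    (S : Finset (EuclideanSpace ℝ (Fin 2))) (F : ℕ)
    (hF : F < ⌈(S.card : ℚ) / 2⌉₊) :
    ∃ K : EuclideanSpace ℝ (Fin 2),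
      ∀ N : Finset (EuclideanSpace ℝ (Fin 2)), N ⊆ S → (S \ N).card ≤ F →
        ∀ (c : EuclideanSpace ℝ (Fin 2)) (ρ : ℝ),
          (∀ p ∈ N, dist p c ≤ ρ) → ∀ p ∈ N, dist p K ≤ 2 * Real.sqrt 2 * ρ := by
  have hS : S.Nonempty := nonempty_iff_ne_empty.mpr (by rintro rfl; simp at hF)
  choose t ht using fun i : Fin 2 => S.exists_median hS (· i)
  set K := WithLp.toLp 2 t
  refine ⟨K, fun N _ hN c ρ hc p hp => ?_⟩
  have hmeets : ∀ {A}, A ⊆ S → #S ≤ 2 * #A → ∃ q ∈ A, q ∈ N := fun hA hA2 =>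
    exists_mem_of_card_sdiff_lt hA (hN.trans_lt (hF.trans_le (Nat.ceil_half_le_iff.mpr hA2)))
  have hK : ∀ i, dist (K i) (c i) ≤ ρ := fun i => by
    obtain ⟨q, hqA, hqN⟩ := hmeets (filter_subset _ _) (ht i).1
    obtain ⟨q', hqA', hqN'⟩ := hmeets (filter_subset _ _) (ht i).2
    exact Real.dist_le_of_mem_Icc_of_dist_le ((PiLp.dist_apply_le _ _ i).trans (hc q hqN))
      ((PiLp.dist_apply_le _ _ i).trans (hc q' hqN'))
      ⟨(mem_filter.mp hqA).2, (mem_filter.mp hqA').2⟩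
  have hρ : 0 ≤ ρ := dist_nonneg.trans (hc p hp)
  have hKc : dist K c ≤ √2 * ρ := by
    simpa using EuclideanSpace.dist_le_sqrt_card_mul hρ hK
  calc dist p K ≤ dist p c + dist K c := dist_triangle_right _ _ _
    _ ≤ ρ + √2 * ρ := add_le_add (hc p hp) hKc
    _ ≤ 2 * √2 * ρ := by nlinarith [Real.one_lt_sqrt_two]
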